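/- (The polar commutes with complexification.) Fix d ≥ 1, let K be a real matrix convex set over ℝ^d, and let A = (A_1, …, A_d) ∈ (M_n(ℂ))^d. Then the following are equivalent: (i) the real tuple (c(A_1), …, c(A_d)) lies in (K°)_{2n}, i.e. for every m and every x ∈ K_m, ℜ(Σ_{j=1}^d x_j ⊗ c(A_j)) ≤ 1_{2mn}; (ii) for every m and every z ∈ (K_c)_m, ℜ_ℂ(Σ_{j=1}^d z_j ⊗ A_j) ≤ 1_{mn}, where ℜ_ℂ M = (M + Mᴴ)/2 and ≤ is the Loewner order on complex matrices. In other words, (K°)_c = (K_c)° under the canonical identification. -/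

import Mathlib

open Matrix
open scoped Kronecker

/-- Block-diagonal direct sum of square matrices. -/
def dsum {α : Type*} [Zero α] {m p : ℕ} (A : Matrix (Fin m) (Fin m) α)
    (B : Matrix (Fin p) (Fin p) α) : Matrix (Fin (m + p)) (Fin (m + p)) α :=
  Matrix.reindex finSumFinEquiv finSumFinEquiv (Matrix.fromBlocks A 0 0 B)

/-- A real matrix convex set over `ℝ^d`: a graded family of sets of `d`-tuples of square
real matrices, closed under direct sums and under compressions by real isometries. -/
def IsRealMatrixConvex (d : ℕ) (K : ∀ n : ℕ, Set (Fin d → Matrix (Fin n) (Fin n) ℝ)) : Prop :=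
  (∀ (m p : ℕ) (x : Fin d → Matrix (Fin m) (Fin m) ℝ) (y : Fin d → Matrix (Fin p) (Fin p) ℝ),
    x ∈ K m → y ∈ K p → (fun j => dsum (x j) (y j)) ∈ K (m + p)) ∧
  (∀ (m p : ℕ) (x : Fin d → Matrix (Fin m) (Fin m) ℝ) (β : Matrix (Fin m) (Fin p) ℝ),
    x ∈ K m → βᵀ * β = 1 → (fun j => βᵀ * x j * β) ∈ K p)

/-- `ℜ M = (M + Mᵀ)/2`. -/
noncomputable def reSym {n : Type*} (M : Matrix n n ℝ) : Matrix n n ℝ := (2 : ℝ)⁻¹ • (M + Mᵀ)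

/-- The Loewner order: `A ≤ B` iff `B - A` is positive semidefinite. -/
def loewnerLE {R : Type*} [CommRing R] [PartialOrder R] [StarRing R] {n : Type*} [Fintype n]
    (A B : Matrix n n R) : Prop :=
  (B - A).PosSemidef

/-- `⟨x, A⟩ = Σ_j x_j ⊗ A_j` (Kronecker products). -/
noncomputable def pairing {d m n : ℕ} (x : Fin d → Matrix (Fin m) (Fin m) ℝ)
    (A : Fin d → Matrix (Fin n) (Fin n) ℝ) : Matrix (Fin m × Fin n) (Fin m × Fin n) ℝ :=
  ∑ j, x j ⊗ₖ A j

/-- A complex matrix convex set over `ℂ^d`. -/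
def IsComplexMatrixConvex (d : ℕ) (L : ∀ n : ℕ, Set (Fin d → Matrix (Fin n) (Fin n) ℂ)) : Prop :=
  (∀ (m p : ℕ) (x : Fin d → Matrix (Fin m) (Fin m) ℂ) (y : Fin d → Matrix (Fin p) (Fin p) ℂ),
    x ∈ L m → y ∈ L p → (fun j => dsum (x j) (y j)) ∈ L (m + p)) ∧
  (∀ (m p : ℕ) (x : Fin d → Matrix (Fin m) (Fin m) ℂ) (β : Matrix (Fin m) (Fin p) ℂ),
    x ∈ L m → βᴴ * β = 1 → (fun j => βᴴ * x j * β) ∈ L p)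

/-- The canonical map `c : M_{k,m}(ℂ) → M_{2k,2m}(ℝ)` sending `Z = X + iY` to the real
block matrix `[[X, -Y], [Y, X]]` (indices reindexed to `Fin (k+k)` and `Fin (m+m)`). -/
noncomputable def cmat {k m : ℕ} (Z : Matrix (Fin k) (Fin m) ℂ) :
    Matrix (Fin (k + k)) (Fin (m + m)) ℝ :=
  Matrix.reindex finSumFinEquiv finSumFinEquiv
    (Matrix.fromBlocks (Z.map Complex.re) (-(Z.map Complex.im))
      (Z.map Complex.im) (Z.map Complex.re))

/-- The complexification of a graded family `K`: at level `n`, the complex tuples `z` with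
`(c(z_1), …, c(z_d)) ∈ K_{2n}`. -/
noncomputable def cplxify (d : ℕ) (K : ∀ n : ℕ, Set (Fin d → Matrix (Fin n) (Fin n) ℝ))
    (n : ℕ) : Set (Fin d → Matrix (Fin n) (Fin n) ℂ) :=
  {z | (fun j => cmat (z j)) ∈ K (n + n)}

open scoped ComplexOrder

/-- The polar of a graded family `K`: at level `n`, the tuples `A` with
`ℜ⟨x, A⟩ ≤ 1_{mn}` for every `m` and every `x ∈ K_m`. -/
def matPolar (d : ℕ) (K : ∀ n : ℕ, Set (Fin d → Matrix (Fin n) (Fin n) ℝ)) (n : ℕ) :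
    Set (Fin d → Matrix (Fin n) (Fin n) ℝ) :=
  {A | ∀ (m : ℕ) (x : Fin d → Matrix (Fin m) (Fin m) ℝ), x ∈ K m →
    loewnerLE (reSym (pairing x A)) 1}

/-- `ℜ_ℂ M = (M + Mᴴ)/2`. -/
noncomputable def reSymC {n : Type*} (M : Matrix n n ℂ) : Matrix n n ℂ :=
  (2 : ℂ)⁻¹ • (M + Mᴴ)

/-!
The map `c` comes from identifying `ℂ^n` with `ℝ^{2n}` via `v ↦ (Re v, Im v)`. Doing this in the
second tensor factor is an isometry `ℂ^m ⊗ ℂ^n ≅ ℝ^m ⊗ ℝ^{2n}` which, for real `x`, intertwines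
`Σ x_j ⊗ A_j` with `Σ x_j ⊗ c(A_j)`; as `c(x) = x ⊕ x`, every real `x ∈ K_m` lies in `(K_c)_m`, and
(ii) ⇒ (i) follows. For (i) ⇒ (ii), test the polar at `c(z) ∈ K_{2m}`: the vectors `(v, -iv)`
form a copy of `ℂ^m` inside `ℂ^{2m}` on which each `c(z_j)` acts as `z_j`, so the quadratic form of
`Σ z_j ⊗ A_j` at `ξ` is half that of `Σ c(z_j) ⊗ c(A_j)` at the realification of `(ξ, -iξ)`.
-/

section QuadraticForm

variable {ι κ : Type*} [Fintype ι] [DecidableEq ι] [Fintype κ] [DecidableEq κ]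

lemma loewnerLE_reSym_one_iff (P : Matrix κ κ ℝ) :
    loewnerLE (reSym P) 1 ↔ ∀ u, u ⬝ᵥ (P *ᵥ u) ≤ u ⬝ᵥ u := by
  have hHerm : (1 - reSym P).IsHermitian := by
    refine isHermitian_one.sub ?_
    simp [IsHermitian, reSym, conjTranspose_eq_transpose_of_trivial, add_comm]
  have hquad : ∀ u : κ → ℝ, u ⬝ᵥ ((1 - reSym P) *ᵥ u) = u ⬝ᵥ u - u ⬝ᵥ (P *ᵥ u) := fun u => by
    rw [sub_mulVec, one_mulVec, dotProduct_sub, reSym, smul_mulVec, dotProduct_smul, add_mulVec,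
      dotProduct_add, dotProduct_mulVec u Pᵀ, vecMul_transpose, dotProduct_comm (P *ᵥ u),
      smul_eq_mul]
    ring
  simp only [loewnerLE, posSemidef_iff_dotProduct_mulVec, hHerm, true_and, star_trivial, hquad,
    sub_nonneg]

lemma loewnerLE_reSymC_one_iff (M : Matrix ι ι ℂ) :
    loewnerLE (reSymC M) 1 ↔ ∀ ξ, (star ξ ⬝ᵥ (M *ᵥ ξ)).re ≤ (star ξ ⬝ᵥ ξ).re := by
  have hHerm : (1 - reSymC M).IsHermitian := by
    refine isHermitian_one.sub ?_
    simp [IsHermitian, reSymC, add_comm]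
  have hquad : ∀ ξ : ι → ℂ, star ξ ⬝ᵥ ((1 - reSymC M) *ᵥ ξ)
      = ((star ξ ⬝ᵥ ξ).re - (star ξ ⬝ᵥ (M *ᵥ ξ)).re : ℝ) := fun ξ => by
    have hself : star ξ ⬝ᵥ ξ = ((star ξ ⬝ᵥ ξ).re : ℂ) := by
      simpa [Complex.ext_iff, eq_comm] using (dotProduct_star_self_nonneg ξ).2
    have hadj : star ξ ⬝ᵥ (Mᴴ *ᵥ ξ) = star (star ξ ⬝ᵥ (M *ᵥ ξ)) := by
      rw [dotProduct_mulVec, ← star_mulVec, star_dotProduct]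
    rw [sub_mulVec, one_mulVec, dotProduct_sub, reSymC, smul_mulVec, dotProduct_smul,
      add_mulVec, dotProduct_add, hadj, Complex.star_def, Complex.add_conj, smul_eq_mul]
    conv_lhs => rw [hself]
    push_cast
    ring
  simp only [loewnerLE, posSemidef_iff_dotProduct_mulVec, hHerm, true_and, hquad,
    Complex.zero_le_real, sub_nonneg]

variable {P : Matrix κ κ ℝ} {M : Matrix ι ι ℂ}

lemma loewnerLE_reSymC_of_reSym (f : (ι → ℂ) → κ → ℝ) {c : ℝ} (hc : 0 < c)
    (hf : ∀ ξ ζ, f ξ ⬝ᵥ f ζ = c * (star ξ ⬝ᵥ ζ).re) (hPM : ∀ ξ, P *ᵥ f ξ = f (M *ᵥ ξ))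
    (h : loewnerLE (reSym P) 1) : loewnerLE (reSymC M) 1 := by
  rw [loewnerLE_reSym_one_iff] at h
  rw [loewnerLE_reSymC_one_iff]
  intro ξ
  have hξ := h (f ξ)
  rw [hPM, hf, hf] at hξ
  exact le_of_mul_le_mul_left hξ hc

lemma loewnerLE_reSym_of_reSymC (f : (ι → ℂ) → κ → ℝ) (hf_surj : Function.Surjective f)
    (hf : ∀ ξ ζ, f ξ ⬝ᵥ f ζ = (star ξ ⬝ᵥ ζ).re) (hPM : ∀ ξ, P *ᵥ f ξ = f (M *ᵥ ξ))
    (h : loewnerLE (reSymC M) 1) : loewnerLE (reSym P) 1 := by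
  rw [loewnerLE_reSymC_one_iff] at h
  rw [loewnerLE_reSym_one_iff]
  intro u
  obtain ⟨ξ, rfl⟩ := hf_surj u
  rw [hPM, hf, hf]
  exact h ξ

end QuadraticForm

lemma sum_mulVec_map_eq_map_sum_mulVec {R S J ι κ : Type*} [NonUnitalNonAssocSemiring R]
    [NonUnitalNonAssocSemiring S] [Fintype ι] [Fintype κ] (f : (ι → S) →+ (κ → R))
    (s : Finset J) {P : J → Matrix κ κ R} {M : J → Matrix ι ι S}
    (h : ∀ j ξ, P j *ᵥ f ξ = f (M j *ᵥ ξ)) (ξ : ι → S) :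
    (∑ j ∈ s, P j) *ᵥ f ξ = f ((∑ j ∈ s, M j) *ᵥ ξ) := by
  simp only [sum_mulVec, h, map_sum]

section ReImSplit

def reImSplit (ι : Type*) (n : ℕ) : (ι × Fin n → ℂ) →+ (ι × Fin (n + n) → ℝ) where
  toFun ξ p := Sum.elim (fun k => (ξ (p.1, k)).re) (fun k => (ξ (p.1, k)).im)
    (finSumFinEquiv.symm p.2)
  map_zero' := by
    ext p
    cases finSumFinEquiv.symm p.2 <;> rfl
  map_add' ξ ζ := by
    ext p
    simp only [Pi.add_apply]
    cases finSumFinEquiv.symm p.2 <;> simp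

variable {ι : Type*} {n : ℕ}

@[simp]
lemma reImSplit_apply_inl (ξ : ι × Fin n → ℂ) (i : ι) (k : Fin n) :
    reImSplit ι n ξ (i, finSumFinEquiv (Sum.inl k)) = (ξ (i, k)).re := by
  simp only [reImSplit, AddMonoidHom.coe_mk, ZeroHom.coe_mk, Equiv.symm_apply_apply, Sum.elim_inl]

@[simp]
lemma reImSplit_apply_inr (ξ : ι × Fin n → ℂ) (i : ι) (k : Fin n) :
    reImSplit ι n ξ (i, finSumFinEquiv (Sum.inr k)) = (ξ (i, k)).im := by
  simp only [reImSplit, AddMonoidHom.coe_mk, ZeroHom.coe_mk, Equiv.symm_apply_apply, Sum.elim_inr]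

lemma reImSplit_surjective : Function.Surjective (reImSplit ι n) := by
  intro u
  refine ⟨fun p => ⟨u (p.1, finSumFinEquiv (Sum.inl p.2)), u (p.1, finSumFinEquiv (Sum.inr p.2))⟩,
    ?_⟩
  ext ⟨i, b⟩
  obtain ⟨t, rfl⟩ := finSumFinEquiv.surjective b
  cases t <;> simp only [reImSplit_apply_inl, reImSplit_apply_inr]

variable [Fintype ι]

lemma reImSplit_dotProduct (ξ ζ : ι × Fin n → ℂ) :
    reImSplit ι n ξ ⬝ᵥ reImSplit ι n ζ = (star ξ ⬝ᵥ ζ).re := by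
  simp only [dotProduct, Fintype.sum_prod_type, Complex.re_sum, ← finSumFinEquiv.sum_comp,
    Fintype.sum_sum_type, reImSplit_apply_inl, reImSplit_apply_inr, ← Finset.sum_add_distrib]
  simp [Complex.mul_re]

lemma kronecker_cmat_mulVec_reImSplit (x : Matrix ι ι ℝ) (B : Matrix (Fin n) (Fin n) ℂ)
    (ζ : ι × Fin n → ℂ) :
    (x ⊗ₖ cmat B) *ᵥ reImSplit ι n ζ = reImSplit ι n ((x.map Complex.ofReal ⊗ₖ B) *ᵥ ζ) := by
  ext ⟨i, b⟩
  obtain ⟨t, rfl⟩ := finSumFinEquiv.surjective b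
  cases t <;>
  · simp only [mulVec, dotProduct, Fintype.sum_prod_type, Complex.re_sum, Complex.im_sum,
      ← finSumFinEquiv.sum_comp, Fintype.sum_sum_type, reImSplit_apply_inl, reImSplit_apply_inr,
      ← Finset.sum_add_distrib, kroneckerMap_apply, cmat, reindex_apply, submatrix_apply,
      Equiv.symm_apply_apply, fromBlocks_apply₁₁, fromBlocks_apply₁₂, fromBlocks_apply₂₁,
      fromBlocks_apply₂₂, map_apply, Matrix.neg_apply]
    refine Finset.sum_congr rfl fun i' _ => Finset.sum_congr rfl fun k' _ => ?_
    simp only [Complex.mul_re, Complex.mul_im, Complex.ofReal_re, Complex.ofReal_im]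
    ring

end ReImSplit

section StackNegI

def stackNegI (m : ℕ) (κ : Type*) : (Fin m × κ → ℂ) →+ (Fin (m + m) × κ → ℂ) where
  toFun ξ p := Sum.elim (fun i => ξ (i, p.2)) (fun i => -Complex.I * ξ (i, p.2))
    (finSumFinEquiv.symm p.1)
  map_zero' := by
    ext p
    cases finSumFinEquiv.symm p.1 <;> simp
  map_add' ξ ζ := by
    ext p
    simp only [Pi.add_apply]
    cases finSumFinEquiv.symm p.1 <;> simp [mul_add]

variable {κ : Type*} {m : ℕ}

@[simp]
lemma stackNegI_apply_inl (ξ : Fin m × κ → ℂ) (i : Fin m) (k : κ) :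
    stackNegI m κ ξ (finSumFinEquiv (Sum.inl i), k) = ξ (i, k) := by
  simp only [stackNegI, AddMonoidHom.coe_mk, ZeroHom.coe_mk, Equiv.symm_apply_apply, Sum.elim_inl]

@[simp]
lemma stackNegI_apply_inr (ξ : Fin m × κ → ℂ) (i : Fin m) (k : κ) :
    stackNegI m κ ξ (finSumFinEquiv (Sum.inr i), k) = -Complex.I * ξ (i, k) := by
  simp only [stackNegI, AddMonoidHom.coe_mk, ZeroHom.coe_mk, Equiv.symm_apply_apply, Sum.elim_inr]

variable [Fintype κ]

lemma star_stackNegI_dotProduct (ξ ζ : Fin m × κ → ℂ) :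
    star (stackNegI m κ ξ) ⬝ᵥ stackNegI m κ ζ = 2 * (star ξ ⬝ᵥ ζ) := by
  simp only [dotProduct, Fintype.sum_prod_type, ← finSumFinEquiv.sum_comp, Fintype.sum_sum_type,
    Pi.star_apply, stackNegI_apply_inl, stackNegI_apply_inr, Finset.mul_sum,
    ← Finset.sum_add_distrib]
  refine Finset.sum_congr rfl fun i _ => Finset.sum_congr rfl fun k _ => ?_
  simp only [star_mul', star_neg, Complex.star_def, Complex.conj_I]
  linear_combination (-(starRingEnd ℂ) (ξ (i, k)) * ζ (i, k)) * Complex.I_sq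

lemma cmat_kronecker_mulVec_stackNegI (Z : Matrix (Fin m) (Fin m) ℂ) (B : Matrix κ κ ℂ)
    (ξ : Fin m × κ → ℂ) :
    ((cmat Z).map Complex.ofReal ⊗ₖ B) *ᵥ stackNegI m κ ξ = stackNegI m κ ((Z ⊗ₖ B) *ᵥ ξ) := by
  ext ⟨a, k⟩
  obtain ⟨s, rfl⟩ := finSumFinEquiv.surjective a
  rcases s with i | i <;>
    simp only [mulVec, dotProduct, Fintype.sum_prod_type, ← finSumFinEquiv.sum_comp,
      Fintype.sum_sum_type, stackNegI_apply_inl, stackNegI_apply_inr, Finset.mul_sum,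
      ← Finset.sum_add_distrib, kroneckerMap_apply, cmat, reindex_apply, submatrix_apply,
      Equiv.symm_apply_apply, fromBlocks_apply₁₁, fromBlocks_apply₁₂, fromBlocks_apply₂₁,
      fromBlocks_apply₂₂, map_apply, Matrix.neg_apply] <;>
    refine Finset.sum_congr rfl fun i' _ => Finset.sum_congr rfl fun k' _ => ?_ <;>
    conv_rhs => rw [← Complex.re_add_im (Z i i')]
  · push_cast
    ring
  · linear_combination (B k k' * ξ (i', k') * (Z i i').im) * Complex.I_sq

end StackNegI

lemma cmat_map_ofReal {m : ℕ} (x : Matrix (Fin m) (Fin m) ℝ) :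
    cmat (x.map Complex.ofReal) = dsum x x := by
  have hre : (x.map Complex.ofReal).map Complex.re = x := by ext; simp
  have him : (x.map Complex.ofReal).map Complex.im = 0 := by ext; simp
  rw [cmat, dsum, hre, him, neg_zero]

lemma map_ofReal_mem_cplxify {d m : ℕ} {K : ∀ n : ℕ, Set (Fin d → Matrix (Fin n) (Fin n) ℝ)}
    (hK : IsRealMatrixConvex d K) {x : Fin d → Matrix (Fin m) (Fin m) ℝ} (hx : x ∈ K m) :
    (fun j => (x j).map Complex.ofReal) ∈ cplxify d K m := by
  simpa only [cplxify, Set.mem_ofPred_eq, cmat_map_ofReal] using hK.1 m m x x hx hx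

lemma pairing_cmat_mulVec_reImSplit {d m n : ℕ} (x : Fin d → Matrix (Fin m) (Fin m) ℝ)
    (A : Fin d → Matrix (Fin n) (Fin n) ℂ) (ζ : Fin m × Fin n → ℂ) :
    pairing x (fun j => cmat (A j)) *ᵥ reImSplit (Fin m) n ζ
      = reImSplit (Fin m) n ((∑ j, (x j).map Complex.ofReal ⊗ₖ A j) *ᵥ ζ) :=
  sum_mulVec_map_eq_map_sum_mulVec _ _ (fun j => kronecker_cmat_mulVec_reImSplit (x j) (A j)) ζ

theorem stmt_15_general (d : ℕ)
    (K : ∀ n : ℕ, Set (Fin d → Matrix (Fin n) (Fin n) ℝ))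
    (hK : IsRealMatrixConvex d K)
    (n : ℕ) (A : Fin d → Matrix (Fin n) (Fin n) ℂ) :
    (fun j => cmat (A j)) ∈ matPolar d K (n + n) ↔
    (∀ (m : ℕ) (z : Fin d → Matrix (Fin m) (Fin m) ℂ), z ∈ cplxify d K m →
      loewnerLE (reSymC (∑ j, z j ⊗ₖ A j)) 1) := by
  constructor
  · intro hA m z hz
    refine loewnerLE_reSymC_of_reSym (reImSplit _ n ∘ stackNegI m _) two_pos (fun ξ ζ => ?_)
      (fun ξ => ?_) (hA _ _ hz)
    · simp only [Function.comp_apply, reImSplit_dotProduct, star_stackNegI_dotProduct,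
        Complex.mul_re, Complex.re_ofNat, Complex.im_ofNat, zero_mul, sub_zero]
    · rw [Function.comp_apply, Function.comp_apply, pairing_cmat_mulVec_reImSplit,
        sum_mulVec_map_eq_map_sum_mulVec _ _ fun j => cmat_kronecker_mulVec_stackNegI (z j) (A j)]
  · intro hA m x hx
    exact loewnerLE_reSym_of_reSymC _ reImSplit_surjective reImSplit_dotProduct
      (pairing_cmat_mulVec_reImSplit x A) (hA m _ (map_ofReal_mem_cplxify hK hx))

theorem stmt_15 (d : ℕ) (hd : 1 ≤ d)
    (K : ∀ n : ℕ, Set (Fin d → Matrix (Fin n) (Fin n) ℝ))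
    (hK : IsRealMatrixConvex d K)
    (n : ℕ) (A : Fin d → Matrix (Fin n) (Fin n) ℂ) :
    (fun j => cmat (A j)) ∈ matPolar d K (n + n) ↔
    (∀ (m : ℕ) (z : Fin d → Matrix (Fin m) (Fin m) ℂ), z ∈ cplxify d K m →
      loewnerLE (reSymC (∑ j, z j ⊗ₖ A j)) 1) :=
  stmt_15_general d K hK n A
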